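/- arXiv:0904.4131 — 2 statements merged into one kernel-verified Lean document; each statement's English description precedes it below -/
import Mathlib

section
/- Derivative of the reduced one-dimensional Version 1 cost: define C₀⁽¹⁾(x) := N·[G(x) − G(ā(x)·x)] + G(X₀ − N(1 − ā(x))x) − G(0). Then for all x ∈ ℝ, d/dx C₀⁽¹⁾(x) = N·(1 − ā(x)(1 − τρ̄′(x)x))·ĥ₁(x), where ĥ₁(x) := h₁(x) − F⁻¹(X₀ − Nx(1 − ā(x))). -/
open Real Filter

/-- `Fi f x = F(x) = ∫₀ˣ f(y) dy`. -/
noncomputable def Fi (f : ℝ → ℝ) (x : ℝ) : ℝ := ∫ y in (0:ℝ)..x, f y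

/-- `Ft f x = F̃(x) = ∫₀ˣ y f(y) dy`. -/
noncomputable def Ft (f : ℝ → ℝ) (x : ℝ) : ℝ := ∫ y in (0:ℝ)..x, y * f y

/-- `Gf f Finv = G = F̃ ∘ F⁻¹`. -/
noncomputable def Gf (f Finv : ℝ → ℝ) (x : ℝ) : ℝ := Ft f (Finv x)

/-- `ab τ ρ x = ā(x) = exp(−τ ρ̄(x))`. -/
noncomputable def ab (τ : ℝ) (ρ : ℝ → ℝ) (x : ℝ) : ℝ := Real.exp (-(τ * ρ x))

/-- The function `h₁` of the generalized AFS model, Version 1. -/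
noncomputable def h1 (Finv : ℝ → ℝ) (τ : ℝ) (ρ : ℝ → ℝ) (x : ℝ) : ℝ :=
  (Finv x - ab τ ρ x * (1 - τ * deriv ρ x * x) * Finv (ab τ ρ x * x)) /
    (1 - ab τ ρ x * (1 - τ * deriv ρ x * x))

/-- `ĥ₁(x) = h₁(x) − F⁻¹(X₀ − Nx(1 − ā(x)))`. -/
noncomputable def h1hat (Finv : ℝ → ℝ) (τ : ℝ) (ρ : ℝ → ℝ) (N : ℕ) (X₀ : ℝ) (x : ℝ) : ℝ :=
  h1 Finv τ ρ x - Finv (X₀ - (N : ℝ) * (x * (1 - ab τ ρ x)))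

/-- The reduced one-dimensional Version 1 cost
`C₀⁽¹⁾(x) = N[G(x) − G(ā(x)x)] + G(X₀ − N(1 − ā(x))x) − G(0)`. -/
noncomputable def C10 (f Finv : ℝ → ℝ) (τ : ℝ) (ρ : ℝ → ℝ) (N : ℕ) (X₀ : ℝ) (x : ℝ) : ℝ :=
  (N : ℝ) * (Gf f Finv x - Gf f Finv (ab τ ρ x * x)) +
    Gf f Finv (X₀ - (N : ℝ) * ((1 - ab τ ρ x) * x)) - Gf f Finv 0

/-! Since `F̃′(y) = y f(y)` and `(F⁻¹)′ = 1 / f ∘ F⁻¹`, the chain rule gives `G′ = F⁻¹`. The cost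
is therefore differentiated term by term, with `(ā(x) x)′ = ā(x)(1 − τρ̄′(x)x)`, and the claimed
form appears after factoring out `1 − ā(x)(1 − τρ̄′(x)x)`, which is nonzero. -/

lemma hasDerivAt_intervalIntegral_zero {g : ℝ → ℝ} (hg : Continuous g) (x : ℝ) :
    HasDerivAt (fun x => ∫ y in (0 : ℝ)..x, g y) (g x) x :=
  (intervalIntegral.integral_hasStrictDerivAt_right (hg.intervalIntegrable 0 x)
    (hg.stronglyMeasurableAtFilter _ _) hg.continuousAt).hasDerivAt

lemma HasDerivAt.of_rightInverse_of_pos {F F' g : ℝ → ℝ} (hF : ∀ y, HasDerivAt F (F' y) y)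
    (hF' : ∀ y, 0 < F' y) (hg : Function.RightInverse g F) (x : ℝ) :
    HasDerivAt g (F' (g x))⁻¹ x := by
  have hmono : StrictMono F := strictMono_of_deriv_pos fun y => (hF y).deriv ▸ hF' y
  have hcont : Continuous g := (hmono.orderIsoOfRightInverse F g hg).symm.continuous
  exact (hF (g x)).of_local_left_inverse hcont.continuousAt (hF' _).ne'
    (Eventually.of_forall hg)

lemma hasDerivAt_Gf {f Finv : ℝ → ℝ} (hf : Continuous f) (hfpos : ∀ x, 0 < f x)
    (hFinv : Function.RightInverse Finv (Fi f)) (x : ℝ) :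
    HasDerivAt (Gf f Finv) (Finv x) x := by
  have hFinv' : HasDerivAt Finv (f (Finv x))⁻¹ x :=
    .of_rightInverse_of_pos (hasDerivAt_intervalIntegral_zero hf) hfpos hFinv x
  have hFt : HasDerivAt (Ft f) (Finv x * f (Finv x)) (Finv x) :=
    hasDerivAt_intervalIntegral_zero (continuous_id.mul hf) (Finv x)
  exact (hFt.comp x hFinv').congr_deriv (by field_simp [(hfpos (Finv x)).ne'])

lemma hasDerivAt_ab_mul_self {τ : ℝ} {ρ : ℝ → ℝ} {x : ℝ} (hρ : DifferentiableAt ℝ ρ x) :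
    HasDerivAt (fun y => ab τ ρ y * y) (ab τ ρ x * (1 - τ * deriv ρ x * x)) x := by
  have hab : HasDerivAt (ab τ ρ) (ab τ ρ x * -(τ * deriv ρ x)) x :=
    (hρ.hasDerivAt.const_mul τ).neg.exp
  exact (hab.mul (hasDerivAt_id' x)).congr_deriv (by ring)

lemma hasDerivAt_C10 {f Finv : ℝ → ℝ} (hf : Continuous f) (hfpos : ∀ x, 0 < f x)
    (hFinv : Function.RightInverse Finv (Fi f)) {τ : ℝ} {ρ : ℝ → ℝ} (N : ℕ) (X₀ : ℝ) {x : ℝ}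
    (hρ : DifferentiableAt ℝ ρ x) :
    HasDerivAt (C10 f Finv τ ρ N X₀)
      (N * (Finv x - ab τ ρ x * (1 - τ * deriv ρ x * x) * Finv (ab τ ρ x * x))
        - N * (1 - ab τ ρ x * (1 - τ * deriv ρ x * x))
          * Finv (X₀ - N * (x * (1 - ab τ ρ x)))) x := by
  have hG := hasDerivAt_Gf hf hfpos hFinv
  have hu := hasDerivAt_ab_mul_self (τ := τ) hρ
  have hv : HasDerivAt (fun y => X₀ - (N : ℝ) * ((1 - ab τ ρ y) * y))
      (-(N * (1 - ab τ ρ x * (1 - τ * deriv ρ x * x)))) x := by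
    have hw : HasDerivAt (fun y => (1 - ab τ ρ y) * y)
        (1 - ab τ ρ x * (1 - τ * deriv ρ x * x)) x :=
      ((hasDerivAt_id' x).fun_sub hu).congr_of_eventuallyEq
        (Eventually.of_forall fun y => by ring)
    exact ((hw.const_mul (N : ℝ)).const_sub X₀).congr_deriv (by ring)
  have hC := (((hG x).sub ((hG _).comp x hu)).const_mul (N : ℝ)).add ((hG _).comp x hv)
    |>.sub_const (Gf f Finv 0)
  rw [show x * (1 - ab τ ρ x) = (1 - ab τ ρ x) * x by ring]
  exact hC.congr_deriv (by ring)

theorem C10_deriv_general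
    (f Finv : ℝ → ℝ) (hf : Continuous f) (hfpos : ∀ x, 0 < f x)
    (hFinv₁ : ∀ x, Fi f (Finv x) = x)
    (τ : ℝ) (ρ : ℝ → ℝ) (hρ : ContDiff ℝ 1 ρ)
    (hwd : ∀ x, ab τ ρ x * (1 - τ * deriv ρ x * x) ≠ 1)
    (N : ℕ) (X₀ : ℝ) :
    ∀ x : ℝ, deriv (C10 f Finv τ ρ N X₀) x =
      (N : ℝ) * (1 - ab τ ρ x * (1 - τ * deriv ρ x * x)) * h1hat Finv τ ρ N X₀ x := by
  intro x
  rw [(hasDerivAt_C10 hf hfpos hFinv₁ N X₀ (hρ.differentiable one_ne_zero x)).deriv,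
    h1hat, h1]
  have hden : 1 - ab τ ρ x * (1 - τ * deriv ρ x * x) ≠ 0 := sub_ne_zero.mpr (hwd x).symm
  field_simp

/-- Derivative of the reduced Version 1 cost:
`(C₀⁽¹⁾)′(x) = N(1 − ā(x)(1 − τρ̄′(x)x))·ĥ₁(x)`. -/
theorem C10_deriv
    (f Finv : ℝ → ℝ) (hf : Continuous f) (hfpos : ∀ x, 0 < f x)
    (htop : Tendsto (Fi f) atTop atTop) (hbot : Tendsto (Fi f) atBot atBot)
    (hFinv₁ : ∀ x, Fi f (Finv x) = x) (hFinv₂ : ∀ x, Finv (Fi f x) = x)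
    (τ : ℝ) (hτ : 0 < τ) (ρ : ℝ → ℝ) (hρ : ContDiff ℝ 1 ρ)
    (hwd : ∀ x, ab τ ρ x * (1 - τ * deriv ρ x * x) ≠ 1)
    (N : ℕ) (hN : 1 ≤ N) (X₀ : ℝ) (hX₀ : 0 < X₀) :
    ∀ x : ℝ, deriv (C10 f Finv τ ρ N X₀) x =
      (N : ℝ) * (1 - ab τ ρ x * (1 - τ * deriv ρ x * x)) * h1hat Finv τ ρ N X₀ x :=
  C10_deriv_general f Finv hf hfpos hFinv₁ τ ρ hρ hwd N X₀
end

section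
/- Coercivity and existence of a minimizer for Version 2: under the standing assumptions on f and ρ̄, and assuming additionally that x² · inf{f(y) : y between ā(x)x and x} → ∞ as |x| → ∞, the cost functional C⁽²⁾ : ℝ^{N+1} → ℝ satisfies C⁽²⁾(x) → ∞ as ‖x‖_∞ → ∞; consequently C⁽²⁾ attains a global minimum on the affine hyperplane Ξ = {x ∈ ℝ^{N+1} : ∑ₙ xₙ = X₀}. -/
open Real Filter Finset

/-- Version 2 dynamics: `D₀ = 0`, `Dₙ⁺ = F⁻¹(F(Dₙ) + xₙ)`, `D_{n+1} = ā(Dₙ⁺)·Dₙ⁺`. -/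
noncomputable def Dv (f Finv : ℝ → ℝ) (τ : ℝ) (ρ : ℝ → ℝ) (x : ℕ → ℝ) : ℕ → ℝ
  | 0 => 0
  | n + 1 =>
      ab τ ρ (Finv (Fi f (Dv f Finv τ ρ x n) + x n)) * Finv (Fi f (Dv f Finv τ ρ x n) + x n)

/-- Version 2 cost functional `C⁽²⁾`. -/
noncomputable def C2 (f Finv : ℝ → ℝ) (τ : ℝ) (ρ : ℝ → ℝ) (N : ℕ) (x : ℕ → ℝ) : ℝ :=
  ∑ n ∈ Finset.range (N + 1),
    (Gf f Finv (x n + Fi f (Dv f Finv τ ρ x n)) - Ft f (Dv f Finv τ ρ x n))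


/-!
Telescoping along the trajectory gives
`C⁽²⁾(x) = ∑ₙ [F̃(Dₙ⁺) - F̃(ā(Dₙ⁺) Dₙ⁺)] + F̃(D_{N+1})`, a sum of nonnegative terms.
The substitution `y = t z` shows `F̃(z) - F̃(a z) ≥ (1 - a²)/2 · z² · inf f` over the interval
between `a z` and `z`; since `ā ≤ e^{-τk} < 1`, the growth hypothesis makes a single term blow up
as `|Dₙ⁺| → ∞`. So if `C⁽²⁾(x)` stays bounded, every `Dₙ⁺` and `Dₙ` stays in some `[-r, r]`, and
`xₙ = F(Dₙ⁺) - F(Dₙ)` is bounded by `F(r) - F(-r)`. The minimizer on `Ξ` then comes from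
compactness of a bounded slice of `Ξ`, after truncating the coordinates beyond `N`.
-/

open Set

theorem continuous_of_rightInverse_of_strictMono {α β : Type*} [LinearOrder α]
    [TopologicalSpace α] [OrderTopology α] [LinearOrder β] [TopologicalSpace β] [OrderTopology β]
    [DenselyOrdered β] {g : β → α} {h : α → β} (hg : StrictMono g)
    (hgh : Function.RightInverse h g) : Continuous h := by
  refine Monotone.continuous_of_surjective (fun a b hab => ?_) fun y => ⟨g y, hg.injective (hgh _)⟩
  rw [← hg.le_iff_le, hgh, hgh]
  exact hab

section Primitives

variable {f : ℝ → ℝ}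

theorem hasDerivAt_Fi (hf : Continuous f) (x : ℝ) : HasDerivAt (Fi f) (f x) x :=
  (hf.integral_hasStrictDerivAt 0 x).hasDerivAt

theorem strictMono_Fi (hf : Continuous f) (hfpos : ∀ x, 0 < f x) : StrictMono (Fi f) :=
  strictMono_of_hasDerivAt_pos (hasDerivAt_Fi hf) hfpos

theorem continuous_Fi (hf : Continuous f) : Continuous (Fi f) :=
  continuous_iff_continuousAt.2 fun x => (hasDerivAt_Fi hf x).continuousAt

theorem continuous_Ft (hf : Continuous f) : Continuous (Ft f) :=
  continuous_iff_continuousAt.2 fun x =>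
    ((continuous_id.mul hf).integral_hasStrictDerivAt 0 x).hasDerivAt.continuousAt

theorem Ft_sub_Ft_mul_eq (hf : Continuous f) (a x : ℝ) :
    Ft f x - Ft f (a * x) = x ^ 2 * ∫ t in a..1, t * f (t * x) := by
  have hint : ∀ u v, IntervalIntegrable (fun y => y * f y) MeasureTheory.volume u v :=
    (continuous_id.mul hf).intervalIntegrable
  calc Ft f x - Ft f (a * x) = ∫ y in a * x..1 * x, y * f y := by
        rw [one_mul]; exact intervalIntegral.integral_interval_sub_left (hint _ _) (hint _ _)
    _ = x * ∫ t in a..1, t * x * f (t * x) :=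
        (intervalIntegral.smul_integral_comp_mul_right (fun y => y * f y) x).symm
    _ = x ^ 2 * ∫ t in a..1, t * f (t * x) := by
        simp_rw [mul_comm _ x, mul_assoc x, intervalIntegral.integral_const_mul]
        ring

theorem mul_sInf_le_Ft_sub_Ft_mul (hf : Continuous f) {a : ℝ} (ha₀ : 0 ≤ a) (ha₁ : a ≤ 1)
    (x : ℝ) : (1 - a ^ 2) / 2 * (x ^ 2 * sInf (f '' uIcc (a * x) x)) ≤ Ft f x - Ft f (a * x) := by
  set m := sInf (f '' uIcc (a * x) x)
  have hm : ∀ t ∈ Icc a 1, m * t ≤ t * f (t * x) := fun t ht => by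
    have hmem : t * x ∈ uIcc (a * x) (1 * x) := by
      rw [← image_mul_const_uIcc]; exact mem_image_of_mem _ (Icc_subset_uIcc ht)
    rw [one_mul] at hmem
    rw [mul_comm]
    exact mul_le_mul_of_nonneg_left
      (csInf_le (isCompact_uIcc.image hf).bddBelow (mem_image_of_mem f hmem)) (ha₀.trans ht.1)
  have hint : m * ((1 - a ^ 2) / 2) ≤ ∫ t in a..1, t * f (t * x) := by
    calc m * ((1 - a ^ 2) / 2) = ∫ t in a..1, m * t := by
          rw [intervalIntegral.integral_const_mul, integral_id]; ring
      _ ≤ _ := intervalIntegral.integral_mono_on ha₁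
          ((continuous_const_mul m).intervalIntegrable _ _)
          ((continuous_id.mul (hf.comp (continuous_mul_const x))).intervalIntegrable _ _) hm
  calc (1 - a ^ 2) / 2 * (x ^ 2 * m) = x ^ 2 * (m * ((1 - a ^ 2) / 2)) := by ring
    _ ≤ Ft f x - Ft f (a * x) := by
      rw [Ft_sub_Ft_mul_eq hf]; exact mul_le_mul_of_nonneg_left hint (sq_nonneg x)

theorem Ft_mul_le (hf : Continuous f) (hf₀ : ∀ x, 0 ≤ f x) {a : ℝ} (ha₀ : 0 ≤ a) (ha₁ : a ≤ 1)
    (x : ℝ) : Ft f (a * x) ≤ Ft f x := by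
  have hm : 0 ≤ sInf (f '' uIcc (a * x) x) :=
    le_csInf (nonempty_uIcc.image f) (forall_mem_image.2 fun y _ => hf₀ y)
  have ha : 0 ≤ (1 - a ^ 2) / 2 := by nlinarith
  exact sub_nonneg.1 ((mul_nonneg ha (mul_nonneg (sq_nonneg x) hm)).trans
    (mul_sInf_le_Ft_sub_Ft_mul hf ha₀ ha₁ x))

theorem Ft_nonneg (hf : Continuous f) (hf₀ : ∀ x, 0 ≤ f x) (x : ℝ) : 0 ≤ Ft f x := by
  simpa [Ft] using Ft_mul_le hf hf₀ le_rfl zero_le_one x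

end Primitives

noncomputable def DvPlus (f Finv : ℝ → ℝ) (τ : ℝ) (ρ : ℝ → ℝ) (x : ℕ → ℝ) (n : ℕ) : ℝ :=
  Finv (Fi f (Dv f Finv τ ρ x n) + x n)

noncomputable def gain (f a : ℝ → ℝ) (z : ℝ) : ℝ := Ft f z - Ft f (a z * z)

section Dynamics

variable {f Finv : ℝ → ℝ} {τ : ℝ} {ρ : ℝ → ℝ}

theorem ab_pos (z : ℝ) : 0 < ab τ ρ z := exp_pos _

theorem Dv_succ (x : ℕ → ℝ) (n : ℕ) :
    Dv f Finv τ ρ x (n + 1) = ab τ ρ (DvPlus f Finv τ ρ x n) * DvPlus f Finv τ ρ x n := rfl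

theorem abs_Dv_succ_le (hab : ∀ z, ab τ ρ z ≤ 1) (x : ℕ → ℝ) (n : ℕ) :
    |Dv f Finv τ ρ x (n + 1)| ≤ |DvPlus f Finv τ ρ x n| := by
  rw [Dv_succ, abs_mul, abs_of_pos (ab_pos _)]
  exact mul_le_of_le_one_left (abs_nonneg _) (hab _)

theorem eq_Fi_DvPlus_sub_Fi_Dv (hFinv : ∀ x, Fi f (Finv x) = x) (x : ℕ → ℝ) (n : ℕ) :
    x n = Fi f (DvPlus f Finv τ ρ x n) - Fi f (Dv f Finv τ ρ x n) := by
  rw [DvPlus, hFinv]; ring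

theorem C2_eq_sum_gain_add (N : ℕ) (x : ℕ → ℝ) :
    C2 f Finv τ ρ N x = ∑ n ∈ range (N + 1), gain f (ab τ ρ) (DvPlus f Finv τ ρ x n)
      + Ft f (Dv f Finv τ ρ x (N + 1)) := by
  have hterm : ∀ n, Gf f Finv (x n + Fi f (Dv f Finv τ ρ x n)) - Ft f (Dv f Finv τ ρ x n) =
      gain f (ab τ ρ) (DvPlus f Finv τ ρ x n)
        + (Ft f (Dv f Finv τ ρ x (n + 1)) - Ft f (Dv f Finv τ ρ x n)) := fun n => by
    rw [Dv_succ, gain, Gf, DvPlus, add_comm (x n)]; ring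
  rw [C2, sum_congr rfl fun n _ => hterm n, sum_add_distrib,
    sum_range_sub (fun n => Ft f (Dv f Finv τ ρ x n))]
  simp [Dv, Ft]

theorem Dv_congr {x y : ℕ → ℝ} {n : ℕ} (h : ∀ m < n, x m = y m) :
    Dv f Finv τ ρ x n = Dv f Finv τ ρ y n := by
  induction n with
  | zero => rfl
  | succ n ih =>
    simp only [Dv, ih fun m hm => h m (hm.trans n.lt_succ_self), h n n.lt_succ_self]

theorem C2_congr {N : ℕ} {x y : ℕ → ℝ} (h : ∀ n ≤ N, x n = y n) :
    C2 f Finv τ ρ N x = C2 f Finv τ ρ N y := by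
  refine sum_congr rfl fun n hn => ?_
  have hn : n ≤ N := Nat.lt_succ_iff.1 (mem_range.1 hn)
  rw [Dv_congr fun m hm => h m (hm.le.trans hn), h n hn]

theorem continuous_Dv (hf : Continuous f) (hFinv : Continuous Finv) (hρ : Continuous ρ) (n : ℕ) :
    Continuous fun x => Dv f Finv τ ρ x n := by
  induction n with
  | zero => exact continuous_const
  | succ n ih =>
    have hplus : Continuous fun x => DvPlus f Finv τ ρ x n :=
      hFinv.comp (((continuous_Fi hf).comp ih).add (continuous_apply n))
    exact ((hρ.comp hplus).const_mul τ).neg.rexp.mul hplus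

theorem continuous_C2 (hf : Continuous f) (hFinv : Continuous Finv) (hρ : Continuous ρ)
    (N : ℕ) : Continuous (C2 f Finv τ ρ N) := by
  have hD := continuous_Dv (τ := τ) hf hFinv hρ
  refine continuous_finsetSum _ fun n _ => ?_
  exact ((continuous_Ft hf).comp (hFinv.comp ((continuous_apply n).add
    ((continuous_Fi hf).comp (hD n))))).sub ((continuous_Ft hf).comp (hD n))

theorem gain_nonneg {a : ℝ → ℝ} (hf : Continuous f) (hf₀ : ∀ x, 0 ≤ f x) {z : ℝ}
    (ha₀ : 0 ≤ a z) (ha₁ : a z ≤ 1) : 0 ≤ gain f a z :=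
  sub_nonneg.2 (Ft_mul_le hf hf₀ ha₀ ha₁ z)

theorem tendsto_gain_cocompact {a : ℝ → ℝ} (hf : Continuous f) {a₀ : ℝ} (ha₀ : ∀ z, 0 ≤ a z)
    (ha : ∀ z, a z ≤ a₀) (ha₁ : a₀ < 1)
    (hinf : Tendsto (fun z => z ^ 2 * sInf (f '' uIcc (a z * z) z)) (cocompact ℝ) atTop) :
    Tendsto (gain f a) (cocompact ℝ) atTop := by
  have hc : 0 < (1 - a₀ ^ 2) / 2 := by nlinarith [ha₀ 0, ha 0]
  refine tendsto_atTop_mono' _ ?_ (hinf.const_mul_atTop hc)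
  filter_upwards [hinf.eventually_ge_atTop 0] with z hz
  calc (1 - a₀ ^ 2) / 2 * (z ^ 2 * sInf (f '' uIcc (a z * z) z))
      ≤ (1 - a z ^ 2) / 2 * (z ^ 2 * sInf (f '' uIcc (a z * z) z)) := by
        gcongr; exacts [ha₀ z, ha z]
    _ ≤ gain f a z := mul_sInf_le_Ft_sub_Ft_mul hf (ha₀ z) ((ha z).trans ha₁.le) z

theorem gain_DvPlus_le_C2 (hf : Continuous f) (hf₀ : ∀ x, 0 ≤ f x) (hab : ∀ z, ab τ ρ z ≤ 1)
    {N n : ℕ} (hn : n ≤ N) (x : ℕ → ℝ) :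
    gain f (ab τ ρ) (DvPlus f Finv τ ρ x n) ≤ C2 f Finv τ ρ N x := by
  rw [C2_eq_sum_gain_add]
  have := single_le_sum (f := fun m => gain f (ab τ ρ) (DvPlus f Finv τ ρ x m))
    (fun m _ => gain_nonneg hf hf₀ (ab_pos _).le (hab _)) (mem_range.2 (Nat.lt_succ_of_le hn))
  linarith [Ft_nonneg hf hf₀ (Dv f Finv τ ρ x (N + 1))]

theorem abs_le_of_forall_abs_DvPlus_le (hFi : Monotone (Fi f)) (hFinv : ∀ x, Fi f (Finv x) = x)
    (hab : ∀ z, ab τ ρ z ≤ 1) {N : ℕ} {r : ℝ} {x : ℕ → ℝ}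
    (hr : ∀ m ≤ N, |DvPlus f Finv τ ρ x m| ≤ r) {n : ℕ} (hn : n ≤ N) :
    |x n| ≤ Fi f r - Fi f (-r) := by
  have hD : |Dv f Finv τ ρ x n| ≤ r := by
    cases n with
    | zero => simpa [Dv] using (abs_nonneg _).trans (hr 0 N.zero_le)
    | succ m => exact (abs_Dv_succ_le hab x m).trans (hr m (by omega))
  have hFi_mem : ∀ z, |z| ≤ r → Fi f (-r) ≤ Fi f z ∧ Fi f z ≤ Fi f r := fun z hz =>
    ⟨hFi (neg_le_of_abs_le hz), hFi (le_of_abs_le hz)⟩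
  obtain ⟨h₁, h₂⟩ := hFi_mem _ (hr n hn)
  obtain ⟨h₃, h₄⟩ := hFi_mem _ hD
  rw [eq_Fi_DvPlus_sub_Fi_Dv hFinv x n, abs_sub_le_iff]
  constructor <;> linarith

theorem C2_coercive (hf : Continuous f) (hfpos : ∀ x, 0 < f x) (hFinv : ∀ x, Fi f (Finv x) = x)
    (hab : ∀ z, ab τ ρ z ≤ 1) (hgain : Tendsto (gain f (ab τ ρ)) (cocompact ℝ) atTop) (N : ℕ)
    (M : ℝ) : ∃ R, ∀ x : ℕ → ℝ, (∃ n ≤ N, R ≤ |x n|) → M ≤ C2 f Finv τ ρ N x := by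
  obtain ⟨r, hr⟩ := Metric.closedBall_compl_subset_of_mem_cocompact (hgain.eventually_ge_atTop M) 0
  refine ⟨Fi f r - Fi f (-r) + 1, fun x ⟨n, hn, hxn⟩ => ?_⟩
  by_contra! hlt
  have hDvPlus : ∀ m ≤ N, |DvPlus f Finv τ ρ x m| ≤ r := fun m hm => by
    by_contra! hgt
    have : M ≤ gain f (ab τ ρ) (DvPlus f Finv τ ρ x m) := hr (by simpa using hgt)
    linarith [gain_DvPlus_le_C2 (Finv := Finv) hf (fun x => (hfpos x).le) hab hm x]
  linarith [abs_le_of_forall_abs_DvPlus_le (strictMono_Fi hf hfpos).monotone hFinv hab hDvPlus hn]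

end Dynamics

theorem exists_forall_le_on_sum_eq_of_coercive {C : (ℕ → ℝ) → ℝ} {N : ℕ} (hC : Continuous C)
    (hloc : ∀ x y, (∀ n ≤ N, x n = y n) → C x = C y)
    (hcoer : ∀ M, ∃ R, ∀ x, (∃ n ≤ N, R ≤ |x n|) → M ≤ C x) (X₀ : ℝ) :
    ∃ ξ, ∑ n ∈ range (N + 1), ξ n = X₀ ∧ ∀ y, ∑ n ∈ range (N + 1), y n = X₀ → C ξ ≤ C y := by
  set H := {x : ℕ → ℝ | ∑ n ∈ range (N + 1), x n = X₀}
  obtain ⟨R, hR⟩ := hcoer (C (Pi.single 0 X₀))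
  set S := univ.pi (fun _ => Icc (-max R |X₀|) (max R |X₀|)) ∩ H
  have hS : IsCompact S := (isCompact_univ_pi fun _ => isCompact_Icc).inter_right
    (isClosed_eq (continuous_finsetSum _ fun n _ => continuous_apply n) continuous_const)
  have hmemS : ∀ x ∈ H, (∀ n, |x n| ≤ max R |X₀|) → x ∈ S := fun x hx hb =>
    ⟨fun n _ => abs_le.1 (hb n), hx⟩
  have hξ₀ : Pi.single 0 X₀ ∈ S := by
    refine hmemS _ (by simp [H]) fun n => ?_
    rcases eq_or_ne n 0 with rfl | hn <;> simp [*]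
  obtain ⟨ξ, hξS, hmin⟩ := hS.exists_isMinOn ⟨_, hξ₀⟩ hC.continuousOn
  refine ⟨ξ, hξS.2, fun y hy => ?_⟩
  by_cases hbig : ∃ n ≤ N, R ≤ |y n|
  · exact (hmin hξ₀).trans (hR y hbig)
  push Not at hbig
  -- truncating `y` after the `N`-th coordinate brings it into `S` without changing `C`
  set y' : ℕ → ℝ := fun n => if n ≤ N then y n else 0
  have hy' : ∀ n ≤ N, y' n = y n := fun n hn => if_pos hn
  have hy'S : y' ∈ S := by
    refine hmemS _ ?_ fun n => ?_
    · show ∑ n ∈ range (N + 1), y' n = X₀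
      rwa [sum_congr rfl fun n hn => hy' n (Nat.lt_succ_iff.1 (mem_range.1 hn))]
    · by_cases hn : n ≤ N
      · rw [hy' n hn]; exact (hbig n hn).le.trans (le_max_left _ _)
      · simp [y', hn]
  exact (hmin hy'S).trans (hloc _ _ hy').le

theorem C2_coercive_and_min_exists_general
    (f Finv : ℝ → ℝ) (hf : Continuous f) (hfpos : ∀ x, 0 < f x)
    (hFinv₁ : ∀ x, Fi f (Finv x) = x)
    (τ : ℝ) (hτ : 0 < τ) (ρ : ℝ → ℝ) (hρ : ContDiff ℝ 1 ρ)
    (k K : ℝ) (hk : 0 < k) (hρbd : ∀ x, k ≤ ρ x ∧ ρ x ≤ K)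
    (hfinf₁ : Tendsto (fun x : ℝ => x ^ 2 * sInf (f '' Set.uIcc (ab τ ρ x * x) x)) atTop atTop)
    (hfinf₂ : Tendsto (fun x : ℝ => x ^ 2 * sInf (f '' Set.uIcc (ab τ ρ x * x) x)) atBot atTop)
    (N : ℕ) (X₀ : ℝ) :
    (∀ M : ℝ, ∃ R : ℝ, ∀ x : ℕ → ℝ, (∃ n ≤ N, R ≤ |x n|) → M ≤ C2 f Finv τ ρ N x) ∧
    (∃ ξ : ℕ → ℝ, (∑ n ∈ Finset.range (N + 1), ξ n = X₀) ∧
      ∀ y : ℕ → ℝ, (∑ n ∈ Finset.range (N + 1), y n = X₀) →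
        C2 f Finv τ ρ N ξ ≤ C2 f Finv τ ρ N y) := by
  have hab : ∀ z, ab τ ρ z ≤ exp (-(τ * k)) := fun z =>
    exp_le_exp.2 (neg_le_neg (mul_le_mul_of_nonneg_left (hρbd z).1 hτ.le))
  have hab₁ : exp (-(τ * k)) < 1 := exp_lt_one_iff.2 (neg_lt_zero.2 (mul_pos hτ hk))
  have hgain : Tendsto (gain f (ab τ ρ)) (cocompact ℝ) atTop :=
    tendsto_gain_cocompact hf (fun z => (ab_pos z).le) hab hab₁
      (by rw [cocompact_eq_atBot_atTop]; exact hfinf₂.sup hfinf₁)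
  have hcoer := C2_coercive hf hfpos hFinv₁ (fun z => (hab z).trans hab₁.le) hgain N
  have hFinv : Continuous Finv :=
    continuous_of_rightInverse_of_strictMono (strictMono_Fi hf hfpos) hFinv₁
  exact ⟨hcoer, exists_forall_le_on_sum_eq_of_coercive (continuous_C2 hf hFinv hρ.continuous N)
    (fun _ _ => C2_congr) hcoer X₀⟩

/-- Coercivity of `C⁽²⁾` (`C⁽²⁾(x) → ∞` as `‖x‖_∞ → ∞`) and existence of a global
minimizer on `Ξ = {x : ∑ₙ xₙ = X₀}`. -/
theorem C2_coercive_and_min_exists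
    (f Finv : ℝ → ℝ) (hf : Continuous f) (hfpos : ∀ x, 0 < f x)
    (htop : Tendsto (Fi f) atTop atTop) (hbot : Tendsto (Fi f) atBot atBot)
    (hFinv₁ : ∀ x, Fi f (Finv x) = x) (hFinv₂ : ∀ x, Finv (Fi f x) = x)
    (τ : ℝ) (hτ : 0 < τ) (ρ : ℝ → ℝ) (hρ : ContDiff ℝ 1 ρ)
    (k K : ℝ) (hk : 0 < k) (hkK : k < K) (hρbd : ∀ x, k ≤ ρ x ∧ ρ x ≤ K)
    (hfinf₁ : Tendsto (fun x : ℝ => x ^ 2 * sInf (f '' Set.uIcc (ab τ ρ x * x) x)) atTop atTop)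
    (hfinf₂ : Tendsto (fun x : ℝ => x ^ 2 * sInf (f '' Set.uIcc (ab τ ρ x * x) x)) atBot atTop)
    (N : ℕ) (hN : 1 ≤ N) (X₀ : ℝ) (hX₀ : 0 < X₀) :
    (∀ M : ℝ, ∃ R : ℝ, ∀ x : ℕ → ℝ, (∃ n ≤ N, R ≤ |x n|) → M ≤ C2 f Finv τ ρ N x) ∧
    (∃ ξ : ℕ → ℝ, (∑ n ∈ Finset.range (N + 1), ξ n = X₀) ∧
      ∀ y : ℕ → ℝ, (∑ n ∈ Finset.range (N + 1), y n = X₀) →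
        C2 f Finv τ ρ N ξ ≤ C2 f Finv τ ρ N y) :=
  C2_coercive_and_min_exists_general f Finv hf hfpos hFinv₁ τ hτ ρ hρ k K hk hρbd hfinf₁ hfinf₂ N X₀
end
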